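/- A natural number m is a sum of three rational squares if and only if it is a sum of three integer squares. -/

import Mathlib

/-!
Davenport–Cassels descent. Write a rational solution as `x / n` with `x` integral and `n` minimal,
and let `w` be the nearest integer point, so that `‖x / n - w‖² ≤ 3 / 4 < 1`. The line through
`x / n` and `w` meets the sphere `‖v‖² = m` a second time in a rational point whose denominator
is `k = n ‖x / n - w‖² < n`; unless `k = 0`, i.e. `x / n = w` is already integral, this
contradicts minimality.
-/

open Matrix

theorem Int.four_mul_bmod_sq_le (x : ℤ) {n : ℕ} (hn : 0 < n) : 4 * x.bmod n ^ 2 ≤ n ^ 2 := by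
  have hlo := Int.le_bmod (x := x) hn
  have hhi := Int.bmod_lt (x := x) hn
  have habs : |2 * x.bmod n| ≤ n := abs_le.mpr ⟨by omega, by omega⟩
  nlinarith [sq_abs (2 * x.bmod n), abs_nonneg (2 * x.bmod n)]

variable {ι : Type*} [Fintype ι]

/-- Up to scaling, the vector on the left is the second point where the line through `x / n` and
`w` meets the quadric `v ⬝ᵥ v = m`. -/
theorem dotProduct_self_second_intersection {R : Type*} [CommRing R] {x : ι → R} {m n : R}
    (hx : x ⬝ᵥ x = m * n ^ 2) (w : ι → R) :
    ((w ⬝ᵥ w - m) • x + (2 * (m * n - x ⬝ᵥ w)) • w) ⬝ᵥ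
        ((w ⬝ᵥ w - m) • x + (2 * (m * n - x ⬝ᵥ w)) • w) =
      m * (m * n - 2 * (x ⬝ᵥ w) + n * (w ⬝ᵥ w)) ^ 2 := by
  simp only [add_dotProduct, dotProduct_add, smul_dotProduct, dotProduct_smul, dotProduct_comm w x,
    smul_eq_mul, hx]
  ring

theorem dotProduct_self_sub_smul {R : Type*} [CommRing R] {x : ι → R} {m n : R}
    (hx : x ⬝ᵥ x = m * n ^ 2) (w : ι → R) :
    (x - n • w) ⬝ᵥ (x - n • w) = n * (m * n - 2 * (x ⬝ᵥ w) + n * (w ⬝ᵥ w)) := by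
  simp only [sub_dotProduct, dotProduct_sub, smul_dotProduct, dotProduct_smul, dotProduct_comm w x,
    smul_eq_mul, hx]
  ring

theorem dotProduct_self_bmod_lt (hι : Fintype.card ι ≤ 3) (x : ι → ℤ) {n : ℕ} (hn : 0 < n) :
    (fun i ↦ (x i).bmod n) ⬝ᵥ (fun i ↦ (x i).bmod n) < n ^ 2 := by
  have h : 4 * ((fun i ↦ (x i).bmod n) ⬝ᵥ (fun i ↦ (x i).bmod n)) ≤ Fintype.card ι * n ^ 2 := by
    simp only [dotProduct, Finset.mul_sum, ← sq]
    exact (Finset.sum_le_sum fun i _ ↦ (x i).four_mul_bmod_sq_le hn).trans_eq (by simp)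
  have : (0 : ℤ) < n := by exact_mod_cast hn
  nlinarith

theorem exists_dotProduct_self_eq_or_descend (hι : Fintype.card ι ≤ 3) {m : ℤ} {n : ℕ} (hn : 0 < n)
    {x : ι → ℤ} (hx : x ⬝ᵥ x = m * n ^ 2) :
    (∃ v : ι → ℤ, v ⬝ᵥ v = m) ∨ ∃ k : ℕ, 0 < k ∧ k < n ∧ ∃ y : ι → ℤ, y ⬝ᵥ y = m * k ^ 2 := by
  set w : ι → ℤ := fun i ↦ (x i).bdiv n
  set r : ι → ℤ := fun i ↦ (x i).bmod n
  set k : ℤ := m * n - 2 * (x ⬝ᵥ w) + n * (w ⬝ᵥ w)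
  have hr : x - (n : ℤ) • w = r := by
    ext i
    simp only [Pi.sub_apply, Pi.smul_apply, smul_eq_mul, w, r]
    linarith [Int.bdiv_add_bmod (x i) n]
  have hrk : r ⬝ᵥ r = n * k := by rw [← hr]; exact dotProduct_self_sub_smul hx w
  have hn' : (0 : ℤ) < n := by exact_mod_cast hn
  have hk_lt : k < n := by nlinarith [dotProduct_self_bmod_lt hι x hn]
  have hk_nonneg : 0 ≤ k := by
    have : 0 ≤ r ⬝ᵥ r := Finset.sum_nonneg fun i _ ↦ mul_self_nonneg (r i)
    nlinarith
  rcases hk_nonneg.eq_or_lt with hk0 | hk_pos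
  · left
    refine ⟨w, ?_⟩
    have hxw : x = (n : ℤ) • w := by
      rw [← sub_eq_zero, hr, ← dotProduct_self_eq_zero, hrk, ← hk0, mul_zero]
    rw [hxw] at hx
    simp only [smul_dotProduct, dotProduct_smul, smul_eq_mul] at hx
    exact mul_left_cancel₀ (pow_ne_zero 2 hn'.ne') (by linear_combination hx)
  · right
    have hy : _ = m * k ^ 2 := dotProduct_self_second_intersection hx w
    rw [← Int.toNat_of_nonneg hk_nonneg] at hy
    exact ⟨k.toNat, by omega, by omega, _, hy⟩

theorem exists_dotProduct_self_eq_of_eq_mul_sq (hι : Fintype.card ι ≤ 3) {m : ℤ} {n : ℕ}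
    (hn : 0 < n) {x : ι → ℤ} (hx : x ⬝ᵥ x = m * n ^ 2) : ∃ v : ι → ℤ, v ⬝ᵥ v = m := by
  induction n using Nat.strong_induction_on generalizing x with
  | _ n ih =>
    obtain hv | ⟨k, hk, hkn, y, hy⟩ := exists_dotProduct_self_eq_or_descend hι hn hx
    · exact hv
    · exact ih k hkn hk hy

theorem Rat.exists_nat_mul_eq_intCast (x : ι → ℚ) :
    ∃ n : ℕ, 0 < n ∧ ∃ v : ι → ℤ, ∀ i, (v i : ℚ) = n * x i := by
  refine ⟨∏ i, (x i).den, Finset.prod_pos fun i _ ↦ (x i).den_pos,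
    fun i ↦ (x i).num * ((∏ j, (x j).den) / (x i).den : ℕ), fun i ↦ ?_⟩
  have hden : ((x i).den : ℚ) ≠ 0 := by positivity
  rw [Int.cast_mul, Int.cast_natCast, Nat.cast_div (Finset.dvd_prod_of_mem _ (Finset.mem_univ i)) hden]
  nth_rw 3 [← Rat.num_div_den (x i)]
  field_simp

theorem exists_int_dotProduct_self_eq_of_rat (hι : Fintype.card ι ≤ 3) {m : ℤ} {x : ι → ℚ}
    (hx : x ⬝ᵥ x = m) : ∃ v : ι → ℤ, v ⬝ᵥ v = m := by
  obtain ⟨n, hn, v, hv⟩ := Rat.exists_nat_mul_eq_intCast x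
  refine exists_dotProduct_self_eq_of_eq_mul_sq hι hn (x := v) ?_
  have : ((v ⬝ᵥ v : ℤ) : ℚ) = m * n ^ 2 := by
    simp only [dotProduct, Int.cast_sum, Int.cast_mul, hv] at hx ⊢
    rw [← hx, Finset.sum_mul]
    exact Finset.sum_congr rfl fun i _ ↦ by ring
  exact_mod_cast this

theorem sum_three_rational_squares_iff_integer (m : ℕ) :
    (∃ x y z : ℚ, x ^ 2 + y ^ 2 + z ^ 2 = (m : ℚ)) ↔
      (∃ a b c : ℤ, a ^ 2 + b ^ 2 + c ^ 2 = (m : ℤ)) := by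
  constructor
  · rintro ⟨x, y, z, h⟩
    obtain ⟨v, hv⟩ := exists_int_dotProduct_self_eq_of_rat (x := ![x, y, z]) (m := m) le_rfl
      (by simpa [dotProduct, Fin.sum_univ_three, sq] using h)
    exact ⟨v 0, v 1, v 2, by simpa [dotProduct, Fin.sum_univ_three, sq] using hv⟩
  · rintro ⟨a, b, c, h⟩
    exact ⟨a, b, c, by exact_mod_cast h⟩
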